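/- arXiv:2003.02992 — 2 statements merged into one kernel-verified Lean document; each statement's English description precedes it below -/
import Mathlib

section
/- Let m > 0, let K and Λ be symmetric positive definite 3×3 real matrices with smallest eigenvalues λ_K > 0 and λ_Λ > 0 respectively, and let d_m ≥ 0. Let p̃ : [0,∞) → ℝ³ be twice continuously differentiable (the position tracking error), let q(t) = ∫₀ᵗ p̃(τ) dτ, and define the composite variable s(t) = p̃'(t) + 2Λ p̃(t) + Λ² q(t). Suppose the closed-loop dynamics satisfy m s'(t) = −K s(t) + ε₀ + ε(t) for all t ≥ 0, where ε₀ ∈ ℝ³ is a constant vector and ε : [0,∞) → ℝ³ is continuously differentiable with ‖ε'(t)‖ ≤ d_m for all t ≥ 0. Then the tracking error converges exponentially to an error ball: limsup_{t→∞} ‖p̃(t)‖ ≤ d_m / (λ_Λ² · λ_K). -/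
/-!
Since `q' = p̃`, the composite variable is `s = (d/dt + Λ)² q`, so the tracking error is the output
of three first-order filters in series: `m v' = -K v + ε'` for `v = s'` (differentiate the
closed-loop dynamics; the bias `ε₀` drops out), then `w' = -Λ w + v` for `w = p̃' + Λ p̃`, and
finally `p̃' = -Λ p̃ + w`. A filter `x' = -L x + u` with `⟪L y, y⟫ ≥ α ‖y‖²` and `‖u‖ ≤ c` is
input-to-state stable: while `‖x‖ ≥ c / α + δ`, `‖x‖²` decreases at a uniform rate, so `‖x‖`
eventually stays below `c / α + δ`. Chaining the three ultimate bounds gives `d_m / λ_K`, then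
`d_m / (λ_K λ_Λ)`, and finally `d_m / (λ_K λ_Λ²)`.
-/

open scoped RealInnerProductSpace

open Filter Set Topology

theorem eventually_nonpos_of_hasDerivAt {h h' : ℝ → ℝ} {κ : ℝ} (hκ : 0 < κ)
    (hh : ∀ᶠ t in atTop, HasDerivAt h (h' t) t)
    (hdecay : ∀ᶠ t in atTop, 0 ≤ h t → h' t ≤ -κ) :
    ∀ᶠ t in atTop, h t ≤ 0 := by
  obtain ⟨T, hT⟩ := eventually_atTop.1 (hh.and hdecay)
  have hcont : ∀ a b, T ≤ a → ContinuousOn h (Icc a b) := fun a b ha t ht =>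
    (hT t (ha.trans ht.1)).1.continuousAt.continuousWithinAt
  have hderiv : ∀ a b, T ≤ a → ∀ t ∈ Ico a b, HasDerivWithinAt h (h' t) (Ici t) t :=
    fun a b ha t ht => (hT t (ha.trans ht.1)).1.hasDerivWithinAt
  -- While `h` is positive it decreases at rate at least `κ`, so it cannot stay positive.
  obtain ⟨t₁, hTt₁, ht₁⟩ : ∃ t₁ ≥ T, h t₁ ≤ 0 := by
    by_contra! hpos
    set t := T + h T / κ + 1
    have hTt : T ≤ t := by have := div_pos (hpos T le_rfl) hκ; linarith
    have hlin := image_le_of_deriv_right_le_deriv_boundary (hcont T t le_rfl) (hderiv T t le_rfl)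
      (B := fun u => h T - κ * (u - T)) (by simp) (fun u _ => by fun_prop)
      (fun u _ => ((hasDerivAt_id u).sub_const T).const_mul κ |>.const_sub _ |>.hasDerivWithinAt)
      (fun u hu => by simpa using (hT u hu.1).2 (hpos u hu.1).le) ⟨hTt, le_rfl⟩
    have : κ * (t - T) = h T + κ := by simp only [t]; field_simp; ring
    linarith [hpos t hTt]
  filter_upwards [eventually_ge_atTop t₁] with t ht
  exact image_le_of_deriv_right_lt_deriv_boundary (hcont t₁ t hTt₁) (hderiv t₁ t hTt₁)
    (B := fun _ => 0) ht₁ (fun _ => hasDerivAt_const _ _)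
    (fun u hu hu0 => ((hT u (hTt₁.trans hu.1)).2 hu0.ge).trans_lt (neg_lt_zero.2 hκ))
    ⟨ht, le_rfl⟩

section NormedGroup

variable {E : Type*} [NormedAddCommGroup E]

/-- `limsup ‖x t‖ ≤ c`, phrased without `Filter.limsup`, whose value on `ℝ` is junk for
functions that are not bounded above. -/
def IsUltimateBound (x : ℝ → E) (c : ℝ) : Prop :=
  ∀ δ > 0, ∀ᶠ t in atTop, ‖x t‖ ≤ c + δ

namespace IsUltimateBound

variable {x u : ℝ → E} {c : ℝ}

theorem of_eventually_norm_le (h : ∀ᶠ t in atTop, ‖x t‖ ≤ c) : IsUltimateBound x c :=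
  fun _ hδ => h.mono fun _ ht => ht.trans (le_add_of_nonneg_right hδ.le)

theorem limsup_norm_le (h : IsUltimateBound x c) : limsup (fun t => ‖x t‖) atTop ≤ c :=
  le_of_forall_pos_le_add fun δ hδ =>
    limsup_le_of_le
      (isBoundedUnder_of_eventually_ge (.of_forall fun _ => norm_nonneg _)).isCoboundedUnder_le
      (h δ hδ)

end IsUltimateBound

end NormedGroup

variable {E : Type*} [NormedAddCommGroup E] [InnerProductSpace ℝ E]

theorem eventually_norm_le_of_hasDerivAt_neg_add {x u : ℝ → E} {L : E → E} {α c δ : ℝ}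
    (hα : 0 < α) (hδ : 0 < δ) (hL : ∀ y, α * ‖y‖ ^ 2 ≤ ⟪L y, y⟫)
    (hx : ∀ᶠ t in atTop, HasDerivAt x (-L (x t) + u t) t)
    (hu : ∀ᶠ t in atTop, ‖u t‖ ≤ c) :
    ∀ᶠ t in atTop, ‖x t‖ ≤ c / α + δ := by
  have hc : 0 ≤ c := let ⟨t, ht⟩ := hu.exists; (norm_nonneg _).trans ht
  set R := c / α + δ with hR
  have hRpos : 0 < R := by positivity
  have hαR : α * R = c + α * δ := by rw [hR]; field_simp
  have hsq : ∀ᶠ t in atTop, ‖x t‖ ^ 2 - R ^ 2 ≤ 0 := by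
    refine eventually_nonpos_of_hasDerivAt (κ := 2 * (α * δ * R)) (by positivity)
      (hx.mono fun t ht => ht.norm_sq.sub_const _) ?_
    filter_upwards [hu] with t hut hge
    have hRx : R ≤ ‖x t‖ := (sq_le_sq₀ hRpos.le (norm_nonneg _)).1 (by linarith)
    have hinner : ⟪x t, -L (x t) + u t⟫ ≤ -(α * ‖x t‖ ^ 2) + ‖x t‖ * c := by
      rw [inner_add_right, inner_neg_right, real_inner_comm]
      linarith [hL (x t), (real_inner_le_norm (x t) (u t)).trans
        (mul_le_mul_of_nonneg_left hut (norm_nonneg _))]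
    nlinarith [mul_le_mul_of_nonneg_left hRx (by positivity : 0 ≤ α * δ),
      mul_le_mul_of_nonneg_left hRx (by positivity : (0:ℝ) ≤ ‖x t‖ * α)]
  filter_upwards [hsq] with t ht
  exact (sq_le_sq₀ (norm_nonneg _) hRpos.le).1 (by linarith)

namespace IsUltimateBound

variable {x u : ℝ → E} {c : ℝ}

theorem of_hasDerivAt_neg_add {L : E → E} {α : ℝ} (hα : 0 < α)
    (hL : ∀ y, α * ‖y‖ ^ 2 ≤ ⟪L y, y⟫) (hx : ∀ᶠ t in atTop, HasDerivAt x (-L (x t) + u t) t)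
    (hu : IsUltimateBound u c) : IsUltimateBound x (c / α) := fun δ hδ => by
  have key := eventually_norm_le_of_hasDerivAt_neg_add hα (half_pos hδ) hL hx
    (hu (α * δ / 2) (by positivity))
  have : (c + α * δ / 2) / α + δ / 2 = c / α + δ := by field_simp; ring
  rwa [this] at key

end IsUltimateBound

theorem HasDerivAt.linearMap_apply {F : Type*} [NormedAddCommGroup F] [NormedSpace ℝ F]
    [FiniteDimensional ℝ E] (A : E →ₗ[ℝ] F) {f : ℝ → E} {f' : E} {t : ℝ}
    (hf : HasDerivAt f f' t) : HasDerivAt (fun u => A (f u)) (A f') t :=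
  (LinearMap.toContinuousLinearMap A).hasFDerivAt.comp_hasDerivAt t hf

theorem hasDerivAt_deriv_of_smul_deriv_eq [FiniteDimensional ℝ E] {s ε : ℝ → E} (K : E →ₗ[ℝ] E)
    (ε₀ : E) {m t : ℝ} (hm : m ≠ 0) (hs : DifferentiableAt ℝ s t) (hε : DifferentiableAt ℝ ε t)
    (hdyn : ∀ᶠ u in 𝓝 t, m • deriv s u = -K (s u) + ε₀ + ε u) :
    HasDerivAt (deriv s) (-(m⁻¹ • K (deriv s t)) + m⁻¹ • deriv ε t) t := by
  have hrhs : HasDerivAt (fun u => m⁻¹ • (-K (s u) + ε₀ + ε u))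
      (m⁻¹ • (-K (deriv s t) + deriv ε t)) t :=
    (((hs.hasDerivAt.linearMap_apply K).neg.add_const ε₀).add hε.hasDerivAt).const_smul m⁻¹
  refine (hrhs.congr_of_eventuallyEq (hdyn.mono fun u hu => ?_)).congr_deriv (by module)
  dsimp only
  rw [← hu, inv_smul_smul₀ hm]

-- `s = (d/dt + A)² q`, hence `s' = (d/dt + A) w` with `w = p' + A p`.
theorem hasDerivAt_composite_variable [FiniteDimensional ℝ E] {p q s : ℝ → E} (A : E →ₗ[ℝ] E)
    (hp : Differentiable ℝ p) (hp' : Differentiable ℝ (deriv p)) (hq : ∀ t, HasDerivAt q (p t) t)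
    (hs : ∀ t, s t = deriv p t + (2 : ℝ) • A (p t) + A (A (q t))) (t : ℝ) :
    HasDerivAt s (A (deriv p t + A (p t)) + (deriv (deriv p) t + A (deriv p t))) t := by
  rw [funext hs]
  refine (((hp' t).hasDerivAt.add (((hp t).hasDerivAt.linearMap_apply A).const_smul (2 : ℝ))).add
    (((hq t).linearMap_apply A).linearMap_apply A)).congr_deriv ?_
  simp only [map_add]
  module

theorem neural_swarm_tracking_error_bound_general
    (m : ℝ) (hm : 0 < m)
    (K Λ : Matrix (Fin 3) (Fin 3) ℝ)
    (lamK lamΛ : ℝ) (hlamK : 0 < lamK) (hlamΛ : 0 < lamΛ)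
    -- `lamK` and `lamΛ` are the smallest eigenvalues of `K` and `Λ`:
    -- they lower-bound the quadratic forms and are attained by eigenvectors.
    (hKlow : ∀ x : EuclideanSpace ℝ (Fin 3), lamK * ‖x‖ ^ 2 ≤ ⟪Matrix.toEuclideanLin K x, x⟫)
    (hΛlow : ∀ x : EuclideanSpace ℝ (Fin 3), lamΛ * ‖x‖ ^ 2 ≤ ⟪Matrix.toEuclideanLin Λ x, x⟫)
    (dm : ℝ)
    -- the position tracking error `pt`, twice continuously differentiable
    (pt : ℝ → EuclideanSpace ℝ (Fin 3)) (hp : ContDiff ℝ 2 pt)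
    -- the time-varying part of the learning error, continuously differentiable with
    -- derivative bounded by `dm`, and the constant bias `ε₀`
    (ε : ℝ → EuclideanSpace ℝ (Fin 3)) (ε₀ : EuclideanSpace ℝ (Fin 3))
    (hε : ContDiff ℝ 1 ε) (hεd : ∀ t ≥ (0:ℝ), ‖deriv ε t‖ ≤ dm)
    -- the integral of the tracking error and the composite variable `s`
    (q s : ℝ → EuclideanSpace ℝ (Fin 3))
    (hq : ∀ t, q t = ∫ τ in (0:ℝ)..t, pt τ)
    (hs : ∀ t, s t = deriv pt t + (2:ℝ) • Matrix.toEuclideanLin Λ (pt t)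
        + Matrix.toEuclideanLin (Λ ^ 2) (q t))
    -- closed-loop dynamics `m ṡ = -K s + ε₀ + ε(t)` for all `t ≥ 0`
    (hdyn : ∀ t ≥ (0:ℝ), m • deriv s t = -(Matrix.toEuclideanLin K (s t)) + ε₀ + ε t) :
    Filter.limsup (fun t => ‖pt t‖) Filter.atTop ≤ dm / (lamΛ ^ 2 * lamK) := by
  set A := Matrix.toEuclideanLin Λ
  have hpd : Differentiable ℝ pt := hp.differentiable (by norm_num)
  have hq' (t : ℝ) : HasDerivAt q (pt t) t := by
    rw [funext hq]; exact (hpd.continuous.integral_hasStrictDerivAt 0 t).hasDerivAt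
  have hp'd : Differentiable ℝ (deriv pt) := (hp.deriv' (n := 1)).differentiable one_ne_zero
  have hs' := hasDerivAt_composite_variable (s := s) A hpd hp'd hq' fun t => by
    rw [hs, Matrix.toLpLin_pow]; rfl
  have hv : ∀ᶠ t in atTop, HasDerivAt (deriv s)
      (-(m⁻¹ • Matrix.toEuclideanLin K (deriv s t)) + m⁻¹ • deriv ε t) t := by
    filter_upwards [eventually_gt_atTop 0] with t ht
    exact hasDerivAt_deriv_of_smul_deriv_eq _ ε₀ hm.ne' (hs' t).differentiableAt
      (hε.differentiable one_ne_zero t) (eventually_ge_nhds ht |>.mono hdyn)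
  set w := fun t => deriv pt t + A (pt t)
  have hw (t : ℝ) : HasDerivAt w (-A (w t) + deriv s t) t := by
    rw [(hs' t).deriv, neg_add_cancel_left]
    exact (hp'd t).hasDerivAt.add ((hpd t).hasDerivAt.linearMap_apply A)
  have hpt (t : ℝ) : HasDerivAt pt (-A (pt t) + w t) t :=
    (hpd t).hasDerivAt.congr_deriv (by simp only [w]; abel)
  have hv_bound : IsUltimateBound (deriv s) (m⁻¹ * dm / (m⁻¹ * lamK)) := by
    refine .of_hasDerivAt_neg_add (L := fun y => m⁻¹ • Matrix.toEuclideanLin K y)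
      (u := fun t => m⁻¹ • deriv ε t) (by positivity) (fun y => ?_) hv (.of_eventually_norm_le ?_)
    · rw [real_inner_smul_left, mul_assoc]
      exact mul_le_mul_of_nonneg_left (hKlow y) (by positivity)
    · filter_upwards [eventually_ge_atTop 0] with t ht
      rw [norm_smul, Real.norm_of_nonneg (by positivity)]
      exact mul_le_mul_of_nonneg_left (hεd t ht) (by positivity)
  have hw_bound := hv_bound.of_hasDerivAt_neg_add hlamΛ hΛlow (.of_forall hw)
  have hpt_bound := hw_bound.of_hasDerivAt_neg_add hlamΛ hΛlow (.of_forall hpt)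
  calc limsup (fun t => ‖pt t‖) atTop ≤ _ := hpt_bound.limsup_norm_le
    _ = dm / (lamΛ ^ 2 * lamK) := by field_simp

/-- **Theorem 1 of the paper** (tracking error bound for the Neural-Swarm position
controller).  With composite variable `s = pt' + 2Λpt + Λ²∫pt` satisfying the closed-loop
dynamics `m ṡ = -K s + ε₀ + ε(t)` with `‖ε̇‖ ≤ d_m`, the tracking error converges
exponentially to the error ball `d_m / (λ_min(Λ)² λ_min(K))`. -/
theorem neural_swarm_tracking_error_bound
    (m : ℝ) (hm : 0 < m)
    (K Λ : Matrix (Fin 3) (Fin 3) ℝ)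
    (hKpd : K.PosDef) (hΛpd : Λ.PosDef)
    (lamK lamΛ : ℝ) (hlamK : 0 < lamK) (hlamΛ : 0 < lamΛ)
    -- `lamK` and `lamΛ` are the smallest eigenvalues of `K` and `Λ`:
    -- they lower-bound the quadratic forms and are attained by eigenvectors.
    (hKlow : ∀ x : EuclideanSpace ℝ (Fin 3), lamK * ‖x‖ ^ 2 ≤ ⟪Matrix.toEuclideanLin K x, x⟫)
    (hΛlow : ∀ x : EuclideanSpace ℝ (Fin 3), lamΛ * ‖x‖ ^ 2 ≤ ⟪Matrix.toEuclideanLin Λ x, x⟫)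
    (hKeig : Module.End.HasEigenvalue (Matrix.toEuclideanLin K) lamK)
    (hΛeig : Module.End.HasEigenvalue (Matrix.toEuclideanLin Λ) lamΛ)
    (dm : ℝ) (hdm : 0 ≤ dm)
    -- the position tracking error `pt`, twice continuously differentiable
    (pt : ℝ → EuclideanSpace ℝ (Fin 3)) (hp : ContDiff ℝ 2 pt)
    -- the time-varying part of the learning error, continuously differentiable with
    -- derivative bounded by `dm`, and the constant bias `ε₀`
    (ε : ℝ → EuclideanSpace ℝ (Fin 3)) (ε₀ : EuclideanSpace ℝ (Fin 3))
    (hε : ContDiff ℝ 1 ε) (hεd : ∀ t ≥ (0:ℝ), ‖deriv ε t‖ ≤ dm)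
    -- the integral of the tracking error and the composite variable `s`
    (q s : ℝ → EuclideanSpace ℝ (Fin 3))
    (hq : ∀ t, q t = ∫ τ in (0:ℝ)..t, pt τ)
    (hs : ∀ t, s t = deriv pt t + (2:ℝ) • Matrix.toEuclideanLin Λ (pt t)
        + Matrix.toEuclideanLin (Λ ^ 2) (q t))
    -- closed-loop dynamics `m ṡ = -K s + ε₀ + ε(t)` for all `t ≥ 0`
    (hdyn : ∀ t ≥ (0:ℝ), m • deriv s t = -(Matrix.toEuclideanLin K (s t)) + ε₀ + ε t) :
    Filter.limsup (fun t => ‖pt t‖) Filter.atTop ≤ dm / (lamΛ ^ 2 * lamK) :=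
  neural_swarm_tracking_error_bound_general m hm K Λ lamK lamΛ hlamK hlamΛ hKlow hΛlow dm pt hp ε ε₀
    hε hεd q s hq hs hdyn
end

section
/- Let k and n be positive integers and let x_min < x_max be real numbers. A continuous function h : ([x_min, x_max]ⁿ)ᵏ → ℝ is permutation-invariant (i.e., h(x_{π(1)}, …, x_{π(k)}) = h(x₁, …, x_k) for every permutation π of {1, …, k} and all x₁, …, x_k ∈ [x_min, x_max]ⁿ) if and only if there exist a positive integer d and functions φ : [x_min, x_max]ⁿ → ℝᵈ and ρ : ℝᵈ → ℝ such that h(x₁, …, x_k) = ρ(∑_{i=1}^{k} φ(x_i)) for all x₁, …, x_k ∈ [x_min, x_max]ⁿ. -/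
/-!
Choose `f` sending the points of the box to `ℚ`-linearly independent reals; this is possible
because the box has at most `𝔠` points and a Hamel basis of `ℝ` over `ℚ` has exactly `𝔠`
elements. In `∑ᵢ f (xᵢ)` the coefficient of `f a` is the multiplicity of `a` among the `xᵢ`,
so the sum determines the tuple up to a permutation, and a permutation-invariant `h` factors
through it. Hence one latent dimension suffices.
-/

open Cardinal

theorem exists_linearIndependent_rat_real_of_mk_le_continuum {X : Type} (hX : #X ≤ 𝔠) :
    ∃ f : X → ℝ, LinearIndependent ℚ f := by
  let b := Module.Basis.ofVectorSpace ℚ ℝ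
  obtain ⟨j⟩ : Nonempty (X ↪ Module.Basis.ofVectorSpaceIndex ℚ ℝ) := by
    rwa [← Cardinal.le_def, b.mk_eq_rank'', Real.rank_rat_real]
  exact ⟨b ∘ j, b.linearIndependent.comp j j.injective⟩

theorem Cardinal.mk_euclideanSpace_le_continuum (ι : Type) [Fintype ι] :
    #(EuclideanSpace ℝ ι) ≤ 𝔠 := by
  rw [mk_congr (WithLp.equiv 2 (ι → ℝ)), mk_arrow, mk_real, lift_id, mk_fintype, lift_natCast]
  exact power_nat_le aleph0_le_continuum

theorem Function.exists_perm_eq_comp_of_card_fiber_eq {ι X : Type*} [Finite ι] {x y : ι → X}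
    (hxy : ∀ a, Nat.card {i // x i = a} = Nat.card {i // y i = a}) :
    ∃ σ : Equiv.Perm ι, x = y ∘ σ := by
  let e a : {i // x i = a} ≃ {i // y i = a} := (Finite.card_eq.mp (hxy a)).some
  exact ⟨Equiv.ofFiberEquiv e, funext fun i => (Equiv.ofFiberEquiv_map e i).symm⟩

section SumOfLinearIndependent

variable {ι X M : Type*} [Fintype ι] [AddCommMonoid M] {f : X → M}

theorem LinearIndependent.card_fiber_eq_of_sum_eq (hf : LinearIndependent ℕ f) {x y : ι → X}
    (hxy : ∑ i, f (x i) = ∑ i, f (y i)) (a : X) :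
    Nat.card {i // x i = a} = Nat.card {i // y i = a} := by
  classical
  have hcount : ∑ i, Finsupp.single (x i) 1 = ∑ i, Finsupp.single (y i) 1 :=
    hf (by simpa [map_sum] using hxy)
  simpa [Nat.card_eq_fintype_card, Fintype.card_subtype, Finsupp.finsetSum_apply,
    Finsupp.single_apply] using DFunLike.congr_fun hcount a

theorem LinearIndependent.exists_eq_comp_sum_of_perm_invariant {β : Type*} [Nonempty β]
    (hf : LinearIndependent ℕ f) {h : (ι → X) → β}
    (hinv : ∀ (σ : Equiv.Perm ι) x, h (x ∘ σ) = h x) :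
    ∃ ρ : M → β, ∀ x, h x = ρ (∑ i, f (x i)) := by
  have hfactors : h.FactorsThrough fun x => ∑ i, f (x i) := fun x y hxy => by
    obtain ⟨σ, rfl⟩ :=
      Function.exists_perm_eq_comp_of_card_fiber_eq (hf.card_fiber_eq_of_sum_eq hxy)
    exact hinv σ y
  obtain ⟨ρ, hρ⟩ := (Function.factorsThrough_iff h).mp hfactors
  exact ⟨ρ, fun x => congrFun hρ x⟩

end SumOfLinearIndependent

theorem deep_sets_decomposition_general
    (k n : ℕ)
    (xmin xmax : ℝ)
    (h : (Fin k → {x : EuclideanSpace ℝ (Fin n) // ∀ i, x i ∈ Set.Icc xmin xmax}) → ℝ) :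
    (∀ (π : Equiv.Perm (Fin k))
        (x : Fin k → {x : EuclideanSpace ℝ (Fin n) // ∀ i, x i ∈ Set.Icc xmin xmax}),
      h (x ∘ π) = h x) ↔
    ∃ d : ℕ, 0 < d ∧
      ∃ (φ : {x : EuclideanSpace ℝ (Fin n) // ∀ i, x i ∈ Set.Icc xmin xmax} → (Fin d → ℝ))
        (ρ : (Fin d → ℝ) → ℝ),
        ∀ x : Fin k → {x : EuclideanSpace ℝ (Fin n) // ∀ i, x i ∈ Set.Icc xmin xmax},
          h x = ρ (∑ i, φ (x i)) := by
  constructor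
  · intro hinv
    obtain ⟨f, hf⟩ := exists_linearIndependent_rat_real_of_mk_le_continuum
      ((mk_subtype_le _).trans (mk_euclideanSpace_le_continuum (Fin n)))
    obtain ⟨ρ, hρ⟩ := (hf.restrict_scalars' ℕ).exists_eq_comp_sum_of_perm_invariant hinv
    refine ⟨1, one_pos, fun a _ => f a, fun v => ρ (v 0), fun x => ?_⟩
    simp only [hρ, Finset.sum_apply]
  · rintro ⟨d, -, φ, ρ, hdecomp⟩ π x
    rw [hdecomp, hdecomp, Function.comp_def, Equiv.sum_comp π fun i => φ (x i)]

/-- Lemma 1 of the paper (adapted from Theorem 7 of Zaheer et al., 'Deep Sets'):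
a continuous function `h` of `k` inputs, each in the compact box `[x_min, x_max]ⁿ ⊂ ℝⁿ`,
is permutation-invariant if and only if it is decomposable as `h(x₁,…,x_k) = ρ(∑ᵢ φ(xᵢ))`
for some latent dimension `d` and functions `φ` and `ρ`. -/
theorem deep_sets_decomposition
    (k n : ℕ) (hk : 0 < k) (hn : 0 < n)
    (xmin xmax : ℝ) (hx : xmin < xmax)
    (h : (Fin k → {x : EuclideanSpace ℝ (Fin n) // ∀ i, x i ∈ Set.Icc xmin xmax}) → ℝ)
    (hcont : Continuous h) :
    (∀ (π : Equiv.Perm (Fin k))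
        (x : Fin k → {x : EuclideanSpace ℝ (Fin n) // ∀ i, x i ∈ Set.Icc xmin xmax}),
      h (x ∘ π) = h x) ↔
    ∃ d : ℕ, 0 < d ∧
      ∃ (φ : {x : EuclideanSpace ℝ (Fin n) // ∀ i, x i ∈ Set.Icc xmin xmax} → (Fin d → ℝ))
        (ρ : (Fin d → ℝ) → ℝ),
        ∀ x : Fin k → {x : EuclideanSpace ℝ (Fin n) // ∀ i, x i ∈ Set.Icc xmin xmax},
          h x = ρ (∑ i, φ (x i)) :=
  deep_sets_decomposition_general k n xmin xmax h
end
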